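/- arXiv:2411.03790 — 2 statements merged into one kernel-verified Lean document; each statement's English description precedes it below -/
import Mathlib

section
/- Let {u_i}_{i∈I} be a frame for H with frame operator S, and let u ∈ H admit a representation u = Σ_{i∈I} u_i q_i with {q_i} ∈ ℓ²(ℍ). Then Σ_i |q_i|² = Σ_i |⟨u_i, S^{-1}u⟩|² + Σ_i |⟨u_i, S^{-1}u⟩ − q_i|². In particular the frame coefficients {⟨u_i, S^{-1}u⟩} have minimal ℓ²-norm among all such representations. -/
noncomputable section
open MulOpposite

abbrev ℍ := Quaternion ℝ

/-- A right quaternionic Hilbert space: a complete normed additive group with a right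
ℍ-module structure (encoded via scalars in `ℍᵐᵒᵖ`, so `op q • v` is the right action `v.q`)
and an ℍ-valued Hermitian inner product compatible with the norm. -/
class QuatHilbert (H : Type*) extends NormedAddCommGroup H, Module ℍᵐᵒᵖ H, CompleteSpace H where
  qinner : H → H → ℍ
  conj_symm : ∀ u v, qinner u v = star (qinner v u)
  add_right : ∀ u v w, qinner u (v + w) = qinner u v + qinner u w
  smul_right : ∀ u v (q : ℍ), qinner u (op q • v) = qinner u v * q
  norm_sq : ∀ u, ‖u‖ ^ 2 = (qinner u u).re
  norm_op_smul : ∀ (q : ℍ) (u : H), ‖op q • u‖ = ‖u‖ * ‖q‖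

notation "⟪" x ", " y "⟫" => QuatHilbert.qinner x y

/-- `Ls` is the adjoint of `L`: `⟨Lu, v⟩ = ⟨u, L*v⟩` for all `u, v`. -/
def IsAdjointPair {H K : Type*} [QuatHilbert H] [QuatHilbert K]
    (L : H →L[ℍᵐᵒᵖ] K) (Ls : K →L[ℍᵐᵒᵖ] H) : Prop :=
  ∀ (u : H) (v : K), ⟪L u, v⟫ = ⟪u, Ls v⟫

/-- Operator norm of a bounded right ℍ-linear operator. -/
def qOpNorm {E F : Type*} [NormedAddCommGroup E] [NormedAddCommGroup F]
    [Module ℍᵐᵒᵖ E] [Module ℍᵐᵒᵖ F] (L : E →L[ℍᵐᵒᵖ] F) : ℝ :=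
  sInf {M : ℝ | 0 ≤ M ∧ ∀ u : E, ‖L u‖ ≤ M * ‖u‖}

/-- `u` is a frame with frame bounds `A`, `B` :
`A‖x‖² ≤ Σ_i |⟨u_i, x⟩|² ≤ B‖x‖²` for all `x`. -/
def IsFrameWith {H : Type*} [QuatHilbert H] {I : Type*} (u : I → H) (A B : ℝ) : Prop :=
  ∀ x : H, Summable (fun i => ‖⟪u i, x⟫‖ ^ 2) ∧
    A * ‖x‖ ^ 2 ≤ ∑' i, ‖⟪u i, x⟫‖ ^ 2 ∧ (∑' i, ‖⟪u i, x⟫‖ ^ 2) ≤ B * ‖x‖ ^ 2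

/-- `u` is a frame: there are bounds `0 < A ≤ B`. -/
def IsFrame {H : Type*} [QuatHilbert H] {I : Type*} (u : I → H) : Prop :=
  ∃ A B : ℝ, 0 < A ∧ A ≤ B ∧ IsFrameWith u A B

/-- `u` is a Bessel sequence: `Σ_i |⟨u_i, x⟩|² ≤ B‖x‖²` for some `B`. -/
def IsBessel {H : Type*} [QuatHilbert H] {I : Type*} (u : I → H) : Prop :=
  ∃ B : ℝ, 0 < B ∧ ∀ x : H, Summable (fun i => ‖⟪u i, x⟫‖ ^ 2) ∧
    (∑' i, ‖⟪u i, x⟫‖ ^ 2) ≤ B * ‖x‖ ^ 2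

/-- `S` is the frame operator of `u` : `S x = Σ_i u_i ⟨u_i, x⟩`. -/
def IsFrameOp {H : Type*} [QuatHilbert H] {I : Type*} (u : I → H) (S : H →L[ℍᵐᵒᵖ] H) : Prop :=
  ∀ x : H, HasSum (fun i => op ⟪u i, x⟫ • u i) (S x)

/-- The space ℓ²(ℍ) of square-summable quaternion families. -/
abbrev lp2 (I : Type*) := lp (fun _ : I => ℍ) 2

/-- `T` is the pre-frame (synthesis) operator of `u` : `T q = Σ_i u_i q_i`. -/
def IsPreFrameOp {H : Type*} [QuatHilbert H] {I : Type*} (u : I → H)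
    (T : lp2 I →L[ℍᵐᵒᵖ] H) : Prop :=
  ∀ q : lp2 I, HasSum (fun i => op (q i) • u i) (T q)

/-- The ℓ²(ℍ) inner product `⟨p, q⟩ = Σ_i conj(p_i) q_i`. -/
def l2inner {I : Type*} (p q : lp2 I) : ℍ := ∑' i, star (p i) * q i

/-- Orthogonal complement of a set in a right quaternionic Hilbert space. -/
def orthoComp {H : Type*} [QuatHilbert H] (A : Set H) : Set H :=
  {v : H | ∀ u ∈ A, ⟪v, u⟫ = 0}

/-- Orthogonal complement in ℓ²(ℍ). -/
def l2orthoComp {I : Type*} (A : Set (lp2 I)) : Set (lp2 I) :=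
  {v : lp2 I | ∀ u ∈ A, l2inner v u = 0}

/-! ### Auxiliary lemmas -/

lemma quat_norm_sq_sub (c d : ℍ) : ‖c - d‖^2 = ‖c‖^2 + ‖d‖^2 - 2*(star c * d).re := by
  have h : ∀ a : ℍ, ‖a‖^2 = Quaternion.normSq a := fun a => by
    rw [sq, Quaternion.normSq_eq_norm_mul_self]
  simp only [h, Quaternion.normSq_def', Quaternion.re_mul, Quaternion.re_star,
    Quaternion.imI_star, Quaternion.imJ_star, Quaternion.imK_star,
    Quaternion.re_sub, Quaternion.imI_sub, Quaternion.imJ_sub, Quaternion.imK_sub]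
  ring

lemma quat_cs_aux (a : ℍ) (r t : ℝ) :
    (star ((t:ℍ) * a) * ((r:ℝ):ℍ) * ((t:ℍ) * a) + star ((t:ℍ) * a) * a
      + star a * ((t:ℍ) * a)).re = t^2 * (r * ‖a‖^2) + 2 * t * ‖a‖^2 := by
  have hn : ‖a‖^2 = Quaternion.normSq a := by rw [sq, Quaternion.normSq_eq_norm_mul_self]
  simp only [Quaternion.coe_mul_eq_smul, Quaternion.star_smul, smul_mul_assoc, mul_smul_comm,
    Quaternion.mul_coe_eq_smul, Quaternion.star_mul_self, hn]
  simp only [Quaternion.re_add, Quaternion.re_smul, smul_eq_mul, Quaternion.re_coe]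
  ring

section aux
variable {H : Type*} [QuatHilbert H]

lemma qinner_zero_right (w : H) : ⟪w, (0:H)⟫ = 0 := by
  have h := QuatHilbert.add_right w 0 0
  rw [add_zero] at h
  exact (left_eq_add.mp h)

lemma qinner_neg_right (w v : H) : ⟪w, -v⟫ = -⟪w, v⟫ := by
  have h := QuatHilbert.add_right w v (-v)
  rw [add_neg_cancel, qinner_zero_right] at h
  exact eq_neg_of_add_eq_zero_right h.symm

lemma qinner_sub_right (w v v' : H) : ⟪w, v - v'⟫ = ⟪w, v⟫ - ⟪w, v'⟫ := by
  rw [sub_eq_add_neg, QuatHilbert.add_right, qinner_neg_right, sub_eq_add_neg]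

lemma qinner_add_left (u v w : H) : ⟪u + v, w⟫ = ⟪u, w⟫ + ⟪v, w⟫ := by
  rw [QuatHilbert.conj_symm, QuatHilbert.add_right, star_add, ← QuatHilbert.conj_symm,
    ← QuatHilbert.conj_symm]

lemma qinner_zero_left (w : H) : ⟪(0:H), w⟫ = 0 := by
  rw [QuatHilbert.conj_symm, qinner_zero_right, star_zero]

lemma qinner_smul_left (u v : H) (q : ℍ) : ⟪op q • u, v⟫ = star q * ⟪u, v⟫ := by
  rw [QuatHilbert.conj_symm, QuatHilbert.smul_right, star_mul, ← QuatHilbert.conj_symm]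

lemma qinner_self_coe (w : H) : ⟪w, w⟫ = ((‖w‖ ^ 2 : ℝ) : ℍ) := by
  have hs : star ⟪w, w⟫ = ⟪w, w⟫ := (QuatHilbert.conj_symm w w).symm
  have hre := QuatHilbert.norm_sq w
  ext
  · rw [Quaternion.re_coe]; exact hre.symm
  · rw [Quaternion.imI_coe]
    have h := congrArg QuaternionAlgebra.imI hs
    rw [Quaternion.imI_star] at h
    linarith
  · rw [Quaternion.imJ_coe]
    have h := congrArg QuaternionAlgebra.imJ hs
    rw [Quaternion.imJ_star] at h
    linarith
  · rw [Quaternion.imK_coe]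
    have h := congrArg QuaternionAlgebra.imK hs
    rw [Quaternion.imK_star] at h
    linarith

/-- Cauchy–Schwarz for the quaternionic inner product. -/
lemma qinner_norm_le (w v : H) : ‖⟪w, v⟫‖ ≤ ‖w‖ * ‖v‖ := by
  set a := ⟪w, v⟫ with ha
  by_cases h0 : a = 0
  · rw [h0, norm_zero]; positivity
  have hw0 : w ≠ 0 := by rintro rfl; exact h0 (qinner_zero_left v)
  have hw : (0:ℝ) < ‖w‖ := norm_pos_iff.mpr hw0
  have hna : (0:ℝ) < ‖a‖ := norm_pos_iff.mpr h0
  have key : ∀ t : ℝ, 0 ≤ t^2 * (‖w‖^2 * ‖a‖^2) + 2 * t * ‖a‖^2 + ‖v‖^2 := by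
    intro t
    have hnn : (0:ℝ) ≤ ‖op ((t:ℍ) * a) • w + v‖ ^ 2 := sq_nonneg _
    rw [QuatHilbert.norm_sq] at hnn
    have hexp : ⟪op ((t:ℍ) * a) • w + v, op ((t:ℍ) * a) • w + v⟫ =
        (star ((t:ℍ) * a) * ⟪w, w⟫ * ((t:ℍ) * a) + star ((t:ℍ) * a) * a
          + star a * ((t:ℍ) * a)) + ⟪v, v⟫ := by
      rw [qinner_add_left, QuatHilbert.add_right, QuatHilbert.add_right,
        qinner_smul_left, qinner_smul_left, QuatHilbert.smul_right, QuatHilbert.smul_right,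
        ← ha, QuatHilbert.conj_symm v w, ← ha]
      noncomm_ring
    rw [hexp, Quaternion.re_add, qinner_self_coe w, quat_cs_aux a (‖w‖^2) t] at hnn
    have hvv : (⟪v, v⟫).re = ‖v‖^2 := (QuatHilbert.norm_sq v).symm
    rw [hvv] at hnn
    linarith
  have hw2 : (0:ℝ) < ‖w‖^2 := by positivity
  have hk := key (-(1 / ‖w‖^2))
  have hsq : ‖a‖^2 ≤ ‖w‖^2 * ‖v‖^2 := by
    have hne : (‖w‖:ℝ)^2 ≠ 0 := ne_of_gt hw2
    have hk' : (-(1 / ‖w‖^2))^2 * (‖w‖^2 * ‖a‖^2) + 2 * (-(1 / ‖w‖^2)) * ‖a‖^2 + ‖v‖^2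
        = ‖v‖^2 - ‖a‖^2 / ‖w‖^2 := by
      field_simp
      ring
    rw [hk'] at hk
    rw [sub_nonneg, div_le_iff₀ hw2] at hk
    nlinarith [hk, hw2]
  nlinarith [hsq, norm_nonneg a, mul_nonneg hw.le (norm_nonneg v)]

/-- `⟪w, ·⟫` is additive and Lipschitz, so it maps `HasSum` to `HasSum`. -/
lemma hasSum_qinner (w : H) {ι : Type*} {f : ι → H} {s : H} (h : HasSum f s) :
    HasSum (fun i => ⟪w, f i⟫) ⟪w, s⟫ := by
  have hcont : Continuous (fun y : H => ⟪w, y⟫) := by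
    apply (LipschitzWith.of_dist_le_mul (K := ‖w‖₊) ?_).continuous
    intro y z
    rw [dist_eq_norm, dist_eq_norm, ← qinner_sub_right]
    simpa [coe_nnnorm] using qinner_norm_le w (y - z)
  exact h.map (AddMonoidHom.mk' (fun y => ⟪w, y⟫) (QuatHilbert.add_right w)) hcont

end aux

/-- If `u = Σ_i u_i q_i` with `{q_i} ∈ ℓ²(ℍ)`, then
`Σ|q_i|² = Σ|⟨u_i, S⁻¹u⟩|² + Σ|⟨u_i, S⁻¹u⟩ − q_i|²`; in particular the frame
coefficients have minimal ℓ²-norm. -/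
theorem stmt5 {H : Type*} [QuatHilbert H] {I : Type*} [Countable I]
    (u : I → H) (hu : IsFrame u)
    (S Sinv : H →L[ℍᵐᵒᵖ] H) (hS : IsFrameOp u S)
    (hinv : ∀ x : H, S (Sinv x) = x ∧ Sinv (S x) = x)
    (x : H) (q : I → ℍ) (hq : Summable (fun i => ‖q i‖ ^ 2))
    (hrep : HasSum (fun i => op (q i) • u i) x) :
    (∑' i, ‖q i‖ ^ 2) =
      (∑' i, ‖⟪u i, Sinv x⟫‖ ^ 2) + ∑' i, ‖⟪u i, Sinv x⟫ - q i‖ ^ 2 := by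
  set c : I → ℍ := fun i => ⟪u i, Sinv x⟫ with hc
  set d : I → ℍ := fun i => c i - q i with hd
  -- the frame coefficients also represent x
  have hcx : HasSum (fun i => op (c i) • u i) x := by
    have h := hS (Sinv x)
    rwa [(hinv x).1] at h
  -- so the difference sums to 0
  have hd0 : HasSum (fun i => op (d i) • u i) (0 : H) := by
    have h := hcx.sub hrep
    rw [sub_self] at h
    convert h using 2 with i
    rw [hd, op_sub, sub_smul]
  -- hence Σ star(c i) * d i = 0
  have hsum0 : HasSum (fun i => star (c i) * d i) 0 := by
    have h := hasSum_qinner (Sinv x) hd0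
    rw [qinner_zero_right] at h
    convert h using 2 with i
    rw [QuatHilbert.smul_right, QuatHilbert.conj_symm (Sinv x) (u i)]
  -- real parts
  have hre : HasSum (fun i => (star (c i) * d i).re) 0 :=
    hsum0.map (AddMonoidHom.mk' (fun a : ℍ => a.re) (fun _ _ => rfl))
      Quaternion.continuous_re
  -- pointwise Pythagorean identity
  have key : ∀ i, ‖q i‖^2 = ‖c i‖^2 + ‖d i‖^2 - 2 * (star (c i) * d i).re := by
    intro i
    have hqi : q i = c i - d i := (sub_sub_cancel (c i) (q i)).symm
    rw [hqi, quat_norm_sq_sub]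
  -- summability of Σ ‖c i‖²
  obtain ⟨A, B, hA, hAB, hfr⟩ := hu
  have hc_sq : Summable (fun i => ‖c i‖^2) := (hfr (Sinv x)).1
  -- summability of Σ ‖d i‖²
  have hd_sq : Summable (fun i => ‖d i‖^2) := by
    have : Summable (fun i => ‖q i‖^2 - ‖c i‖^2 + 2 * (star (c i) * d i).re) :=
      (hq.sub hc_sq).add (hre.summable.mul_left 2)
    refine this.congr fun i => ?_
    rw [key i]; ring
  -- combine
  have h := (hc_sq.hasSum.add hd_sq.hasSum).sub (hre.mul_left 2)
  have h2 : HasSum (fun i => ‖q i‖^2)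
      ((∑' i, ‖c i‖^2) + (∑' i, ‖d i‖^2) - 2 * 0) := by
    have hfun : (fun i => ‖q i‖^2)
        = fun i => ‖c i‖^2 + ‖d i‖^2 - 2 * (star (c i) * d i).re := funext key
    rw [hfun]
    exact h
  rw [h2.tsum_eq]
  ring
end
end

section
/- Let {u_i}_{i∈I} ⊂ H and suppose its pre-frame operator T : ℓ²(ℍ) → H, T({q_i}) = Σ_i u_i q_i, is well defined, bounded, and surjective. Then {u_i}_{i∈I} is a frame for H. (Together with the converse, surjectivity of the pre-frame operator characterizes frames.) -/
noncomputable section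
open MulOpposite

namespace Aux
variable {H : Type*} [QuatHilbert H]

lemma qinner_zero_right (u : H) : ⟪u, (0:H)⟫ = 0 := by
  have h := QuatHilbert.add_right u (0:H) 0
  rw [add_zero] at h
  exact (left_eq_add.mp h)

lemma qinner_zero_left (u : H) : ⟪(0:H), u⟫ = 0 := by
  rw [QuatHilbert.conj_symm, qinner_zero_right, star_zero]

lemma qinner_add_left (u v w : H) : ⟪u + v, w⟫ = ⟪u, w⟫ + ⟪v, w⟫ := by
  rw [QuatHilbert.conj_symm, QuatHilbert.add_right, star_add, ← QuatHilbert.conj_symm,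
    ← QuatHilbert.conj_symm]

lemma qinner_smul_left (u v : H) (q : ℍ) : ⟪op q • u, v⟫ = star q * ⟪u, v⟫ := by
  rw [QuatHilbert.conj_symm, QuatHilbert.smul_right, star_mul, ← QuatHilbert.conj_symm]

lemma qinner_neg_right (u v : H) : ⟪u, -v⟫ = -⟪u, v⟫ := by
  have h := QuatHilbert.add_right u v (-v)
  rw [add_neg_cancel, qinner_zero_right] at h
  exact (eq_neg_of_add_eq_zero_right h.symm).symm ▸ rfl

lemma qinner_neg_left (u v : H) : ⟪-u, v⟫ = -⟪u, v⟫ := by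
  rw [QuatHilbert.conj_symm, qinner_neg_right, star_neg, ← QuatHilbert.conj_symm]

lemma qinner_sub_right (u v w : H) : ⟪u, v - w⟫ = ⟪u, v⟫ - ⟪u, w⟫ := by
  rw [sub_eq_add_neg, QuatHilbert.add_right, qinner_neg_right, sub_eq_add_neg]

lemma qinner_sub_left (u v w : H) : ⟪u - v, w⟫ = ⟪u, w⟫ - ⟪v, w⟫ := by
  rw [sub_eq_add_neg, qinner_add_left, qinner_neg_left, sub_eq_add_neg]

lemma re_le_norm (q : ℍ) : q.re ≤ ‖q‖ := by
  have h1 : Quaternion.normSq q = ‖q‖ * ‖q‖ := Quaternion.normSq_eq_norm_mul_self q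
  have h2 : Quaternion.normSq q = q.re ^ 2 + q.imI ^ 2 + q.imJ ^ 2 + q.imK ^ 2 :=
    Quaternion.normSq_def' q
  nlinarith [norm_nonneg q, sq_nonneg q.imI, sq_nonneg q.imJ, sq_nonneg q.imK,
    sq_nonneg (q.re - ‖q‖)]

lemma re_qinner_le (a b : H) : (⟪a, b⟫).re ≤ ‖a‖ * ‖b‖ := by
  have key : ∀ t : ℝ, 2 * t * (⟪a, b⟫).re ≤ t ^ 2 * ‖a‖ ^ 2 + ‖b‖ ^ 2 := by
    intro t
    have h0 : (0:ℝ) ≤ ‖op ((t : ℍ)) • a - b‖ ^ 2 := sq_nonneg _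
    rw [QuatHilbert.norm_sq] at h0
    have hstar : star ((t : ℍ)) = (t : ℍ) := Quaternion.star_coe t
    simp only [qinner_sub_left, qinner_sub_right, qinner_smul_left,
      QuatHilbert.smul_right, hstar] at h0
    have hre : ∀ x : ℍ, ((t : ℍ) * x).re = t * x.re := by
      intro x; rw [Quaternion.coe_mul_eq_smul]; simp
    have hre' : ∀ x : ℍ, (x * (t : ℍ)).re = t * x.re := by
      intro x; rw [← Quaternion.coe_commutes]; exact hre x
    have hba : (⟪b, a⟫).re = (⟪a, b⟫).re := by
      rw [QuatHilbert.conj_symm b a]; simp [Quaternion.re_star]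
    have hna : (⟪a, a⟫).re = ‖a‖ ^ 2 := (QuatHilbert.norm_sq a).symm
    have hnb : (⟪b, b⟫).re = ‖b‖ ^ 2 := (QuatHilbert.norm_sq b).symm
    simp only [Quaternion.re_sub, hre, hre'] at h0
    rw [hba, hna, hnb] at h0
    nlinarith
  rcases eq_or_ne a 0 with rfl | ha0
  · rw [qinner_zero_left]; simpa [Quaternion.re_zero] using mul_nonneg (norm_nonneg (0:H)) (norm_nonneg b)
  rcases eq_or_ne b 0 with rfl | hb0
  · rw [qinner_zero_right]; simpa [Quaternion.re_zero] using mul_nonneg (norm_nonneg a) (norm_nonneg (0:H))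
  have ha : 0 < ‖a‖ := norm_pos_iff.mpr ha0
  have hb : 0 < ‖b‖ := norm_pos_iff.mpr hb0
  have hk := key (‖b‖ / ‖a‖)
  have ht : ‖b‖ / ‖a‖ * ‖a‖ = ‖b‖ := div_mul_cancel₀ _ ha.ne'
  have htpos : 0 < ‖b‖ / ‖a‖ := div_pos hb ha
  nlinarith [hk, ht, htpos, mul_pos htpos ha]

lemma norm_qinner_le (a b : H) : ‖⟪a, b⟫‖ ≤ ‖a‖ * ‖b‖ := by
  set c := ⟪a, b⟫ with hc
  rcases eq_or_ne c 0 with h | h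
  · rw [h]; simpa using mul_nonneg (norm_nonneg a) (norm_nonneg b)
  have hcpos : 0 < ‖c‖ := norm_pos_iff.mpr h
  have h1 : (⟪b, op c • a⟫).re = ‖c‖ ^ 2 := by
    rw [QuatHilbert.smul_right]
    have : ⟪b, a⟫ = star c := by rw [hc, ← QuatHilbert.conj_symm]
    rw [this, Quaternion.star_mul_self]
    rw [Quaternion.re_coe, Quaternion.normSq_eq_norm_mul_self, sq]
  have h2 := re_qinner_le b (op c • a)
  rw [QuatHilbert.norm_op_smul, h1] at h2
  nlinarith [hcpos]
end Aux

namespace Aux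
variable {H : Type*} [QuatHilbert H]

/-- `v ↦ ⟪v, x⟫` as an additive monoid hom. -/
def qinnerHom (x : H) : H →+ ℍ :=
  AddMonoidHom.mk' (fun v => ⟪v, x⟫) (fun a b => qinner_add_left a b x)

lemma continuous_qinnerHom (x : H) : Continuous (qinnerHom (H := H) x) := by
  apply (LipschitzWith.of_dist_le_mul (K := ‖x‖₊) (f := fun v : H => ⟪v, x⟫) ?_).continuous
  intro a b
  rw [dist_eq_norm, dist_eq_norm]
  have : ⟪a, x⟫ - ⟪b, x⟫ = ⟪a - b, x⟫ := (qinner_sub_left a b x).symm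
  rw [this, coe_nnnorm]
  calc ‖⟪a - b, x⟫‖ ≤ ‖a - b‖ * ‖x‖ := norm_qinner_le _ _
    _ = ‖x‖ * ‖a - b‖ := mul_comm _ _

/-- real part as an additive monoid hom -/
def reHom : ℍ →+ ℝ := AddMonoidHom.mk' QuaternionAlgebra.re (fun a b => Quaternion.re_add a b)

lemma hasSum_re_qinner {ι : Type*} {f : ι → H} {s : H} (hf : HasSum f s) (x : H) :
    HasSum (fun i => (⟪f i, x⟫).re) ((⟪s, x⟫).re) :=
  (hf.map (qinnerHom x) (continuous_qinnerHom x)).map reHom Quaternion.continuous_re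

/-- The ring hom `ℝ → ℍᵐᵒᵖ`. -/
def realToHop : ℝ →+* ℍᵐᵒᵖ :=
  (algebraMap ℝ ℍ).toOpposite (fun x y => by
    simpa [Commute, SemiconjBy] using (Quaternion.coe_commutes (x : ℝ) (y : ℍ)))

instance quatHilbertRealModule : Module ℝ H := Module.compHom H realToHop

lemma real_smul_def (r : ℝ) (x : H) : r • x = op ((r : ℍ)) • x := rfl

instance quatHilbertRealNormed : NormedSpace ℝ H where
  norm_smul_le r x := by
    rw [real_smul_def, QuatHilbert.norm_op_smul]
    rw [Quaternion.norm_coe]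
    rw [Real.norm_eq_abs, mul_comm]

end Aux


namespace Aux
variable {H : Type*} [QuatHilbert H]

/-- `T` as a continuous ℝ-linear map. -/
def Tr {I : Type*} (T : lp2 I →L[ℍᵐᵒᵖ] H) : lp2 I →L[ℝ] H where
  toFun := T
  map_add' a b := T.map_add a b
  map_smul' r q := by
    have h : (r • q : lp2 I) = op ((r : ℍ)) • q := by
      apply lp.ext
      rw [lp.coeFn_smul, lp.coeFn_smul]
      funext i
      show r • q i = op ((r : ℍ)) • q i
      rw [op_smul_eq_mul, ← Quaternion.coe_commutes, Quaternion.coe_mul_eq_smul]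
    show T (r • q) = op ((r : ℍ)) • T q
    rw [h, T.map_smul]
  cont := T.cont

lemma two_toReal : (2 : ENNReal).toReal = 2 := by norm_num

lemma rpow_two_eq (x : ℝ) (hx : 0 ≤ x) : x ^ ((2 : ENNReal).toReal) = x ^ 2 := by
  rw [two_toReal, ← Real.rpow_natCast x 2]
  norm_num

end Aux


set_option maxHeartbeats 1000000 in
/-- If the pre-frame operator `T : ℓ²(ℍ) → H` of `{u_i}` is well defined,
bounded and surjective, then `{u_i}` is a frame for `H`. -/
theorem stmt8 {H : Type*} [QuatHilbert H] {I : Type*} [Countable I]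
    (u : I → H) (T : lp2 I →L[ℍᵐᵒᵖ] H) (hT : IsPreFrameOp u T)
    (hsurj : Function.Surjective T) :
    IsFrame u := by
  classical
  set T' := Aux.Tr T with hT'def
  have hsurj' : Function.Surjective T' := hsurj
  obtain ⟨C, Cpos, hC⟩ := T'.exists_preimage_norm_le hsurj'
  set M := ‖T'‖ with hMdef
  have hM : 0 ≤ M := hMdef ▸ norm_nonneg T'
  refine ⟨1 / C ^ 2, max (M ^ 2) (1 / C ^ 2), by positivity, le_max_right _ _, ?_⟩
  intro x
  set c : I → ℍ := fun i => ⟪u i, x⟫ with hc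
  have hterm : ∀ i, (⟪op (c i) • u i, x⟫).re = ‖c i‖ ^ 2 := by
    intro i
    rw [Aux.qinner_smul_left]
    have hci : ⟪u i, x⟫ = c i := rfl
    rw [hci, Quaternion.star_mul_self, Quaternion.re_coe,
      Quaternion.normSq_eq_norm_mul_self, sq]
  -- Upper bound on all finite partial sums
  have bound_F : ∀ F : Finset I, ∑ i ∈ F, ‖c i‖ ^ 2 ≤ M ^ 2 * ‖x‖ ^ 2 := by
    intro F
    set S := ∑ i ∈ F, ‖c i‖ ^ 2 with hSdef
    have hS0 : 0 ≤ S := Finset.sum_nonneg fun i _ => sq_nonneg _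
    rcases eq_or_lt_of_le hS0 with hS | hSpos
    · rw [← hS]; positivity
    have hmem : Memℓp (fun i => if i ∈ F then c i else 0) 2 := by
      apply memℓp_gen
      apply summable_of_ne_finset_zero (s := F)
      intro i hi
      simp [hi, Real.zero_rpow (by norm_num : ((2:ENNReal).toReal) ≠ 0)]
    set qF : lp2 I := ⟨fun i => if i ∈ F then c i else 0, hmem⟩ with hqFdef
    have hqF : ∀ i, qF i = if i ∈ F then c i else 0 := fun i => rfl
    have h2 : HasSum (fun i => op (qF i) • u i) (∑ i ∈ F, op (qF i) • u i) := by
      apply hasSum_sum_of_ne_finset_zero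
      intro i hi
      rw [hqF i, if_neg hi, op_zero, zero_smul]
    have hTq : T qF = ∑ i ∈ F, op (c i) • u i := by
      rw [(hT qF).unique h2]
      refine Finset.sum_congr rfl fun i hi => ?_
      rw [hqF i, if_pos hi]
    have hre : (⟪T qF, x⟫).re = S := by
      have hs : ⟪T qF, x⟫ = ∑ i ∈ F, ⟪op (c i) • u i, x⟫ := by
        rw [hTq]
        exact map_sum (Aux.qinnerHom x) _ F
      have hr : (∑ i ∈ F, ⟪op (c i) • u i, x⟫).re
          = ∑ i ∈ F, (⟪op (c i) • u i, x⟫).re := map_sum Aux.reHom _ F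
      rw [hs, hr]
      exact Finset.sum_congr rfl fun i _ => hterm i
    have hnorm_qF : ‖qF‖ = Real.sqrt S := by
      rw [lp.norm_eq_tsum_rpow (by norm_num : 0 < (2:ENNReal).toReal) qF]
      have ht : (∑' i, ‖qF i‖ ^ (2:ENNReal).toReal) = S := by
        rw [tsum_eq_sum (s := F) (by
          intro i hi
          rw [hqF i, if_neg hi, norm_zero,
            Real.zero_rpow (by norm_num : ((2:ENNReal).toReal) ≠ 0)])]
        refine Finset.sum_congr rfl fun i hi => ?_
        rw [hqF i, if_pos hi]
        exact Aux.rpow_two_eq _ (norm_nonneg _)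
      rw [ht, Real.sqrt_eq_rpow, Aux.two_toReal]
    have hub : S ≤ M * ‖qF‖ * ‖x‖ := by
      calc S = (⟪T qF, x⟫).re := hre.symm
        _ ≤ ‖T qF‖ * ‖x‖ := Aux.re_qinner_le _ _
        _ ≤ M * ‖qF‖ * ‖x‖ := by
            have : ‖T' qF‖ ≤ M * ‖qF‖ := T'.le_opNorm qF
            have hTT : T qF = T' qF := rfl
            rw [hTT]
            exact mul_le_mul_of_nonneg_right this (norm_nonneg x)
    rw [hnorm_qF] at hub
    have hsq := Real.sq_sqrt hS0
    have hsn := Real.sqrt_nonneg S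
    have hsp : 0 < Real.sqrt S := Real.sqrt_pos.mpr hSpos
    nlinarith [norm_nonneg x, mul_nonneg hM (norm_nonneg x)]
  have hsummable : Summable (fun i => ‖c i‖ ^ 2) :=
    summable_of_sum_le (fun i => sq_nonneg _) bound_F
  have htsum_ub : (∑' i, ‖c i‖ ^ 2) ≤ M ^ 2 * ‖x‖ ^ 2 :=
    Summable.tsum_le_of_sum_le hsummable bound_F
  refine ⟨hsummable, ?_, le_trans htsum_ub (by
    have : M ^ 2 ≤ max (M ^ 2) (1 / C ^ 2) := le_max_left _ _
    exact mul_le_mul_of_nonneg_right this (sq_nonneg _))⟩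
  -- Lower bound
  set S := ∑' i, ‖c i‖ ^ 2 with hSdef
  have hS0 : 0 ≤ S := tsum_nonneg fun i => sq_nonneg _
  rcases eq_or_ne x 0 with rfl | hx0
  · simpa using hS0
  have hx : 0 < ‖x‖ := norm_pos_iff.mpr hx0
  obtain ⟨q, hqx, hqn⟩ := hC x
  have hsum := Aux.hasSum_re_qinner (hT q) x
  have hTqx : T q = x := hqx
  have hx2 : (⟪T q, x⟫).re = ‖x‖ ^ 2 := by rw [hTqx, ← QuatHilbert.norm_sq]
  have hpt : ∀ i, (⟪op (q i) • u i, x⟫).re ≤ ‖q i‖ * ‖c i‖ := by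
    intro i
    rw [Aux.qinner_smul_left]
    have hci : ⟪u i, x⟫ = c i := rfl
    rw [hci]
    calc (star (q i) * c i).re ≤ ‖star (q i) * c i‖ := Aux.re_le_norm _
      _ = ‖q i‖ * ‖c i‖ := by rw [norm_mul, norm_star]
  have hq2 : Summable (fun i => ‖q i‖ ^ 2) := by
    have hm := lp.memℓp q
    rw [memℓp_gen_iff (by norm_num : 0 < (2:ENNReal).toReal)] at hm
    have he : (fun i => ‖q i‖ ^ 2) = fun i => ‖q i‖ ^ (2:ENNReal).toReal := by
      funext i; exact (Aux.rpow_two_eq _ (norm_nonneg _)).symm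
    rw [he]; exact hm
  have hg : Summable (fun i => ‖q i‖ * ‖c i‖) := by
    apply Summable.of_nonneg_of_le
      (fun i => mul_nonneg (norm_nonneg _) (norm_nonneg _))
      (fun i => ?_) ((hq2.add hsummable).div_const 2)
    have := sq_nonneg (‖q i‖ - ‖c i‖)
    simp only [Pi.add_apply]
    nlinarith
  have h1 : ‖x‖ ^ 2 ≤ ∑' i, ‖q i‖ * ‖c i‖ := by
    rw [← hx2]
    calc (⟪T q, x⟫).re = ∑' i, (⟪op (q i) • u i, x⟫).re := hsum.tsum_eq.symm
      _ ≤ ∑' i, ‖q i‖ * ‖c i‖ := hsum.summable.tsum_le_tsum hpt hg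
  have h2 : (∑' i, ‖q i‖ * ‖c i‖) ≤ ‖q‖ * Real.sqrt S := by
    apply Summable.tsum_le_of_sum_le hg
    intro F
    have cs := Finset.sum_mul_sq_le_sq_mul_sq F (fun i => ‖q i‖) (fun i => ‖c i‖)
    have hq' : ∑ i ∈ F, ‖q i‖ ^ 2 ≤ ‖q‖ ^ 2 := by
      have hb := lp.sum_rpow_le_norm_rpow
        (by norm_num : 0 < (2:ENNReal).toReal) q F
      rw [Aux.rpow_two_eq _ (norm_nonneg q)] at hb
      calc ∑ i ∈ F, ‖q i‖ ^ 2 = ∑ i ∈ F, ‖q i‖ ^ (2:ENNReal).toReal :=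
            Finset.sum_congr rfl fun i _ => (Aux.rpow_two_eq _ (norm_nonneg _)).symm
        _ ≤ ‖q‖ ^ 2 := hb
    have hc' : ∑ i ∈ F, ‖c i‖ ^ 2 ≤ S :=
      hsummable.sum_le_tsum F (fun i _ => sq_nonneg _)
    have h3 : (∑ i ∈ F, ‖q i‖ * ‖c i‖) ^ 2 ≤ ‖q‖ ^ 2 * S :=
      le_trans cs (mul_le_mul hq' hc'
        (Finset.sum_nonneg fun i _ => sq_nonneg _) (sq_nonneg _))
    have h4 : ∑ i ∈ F, ‖q i‖ * ‖c i‖ ≤ Real.sqrt (‖q‖ ^ 2 * S) :=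
      (Real.le_sqrt (Finset.sum_nonneg fun i _ =>
        mul_nonneg (norm_nonneg _) (norm_nonneg _))
        (mul_nonneg (sq_nonneg _) hS0)).mpr h3
    rwa [Real.sqrt_mul (sq_nonneg _), Real.sqrt_sq (norm_nonneg q)] at h4
  have h5 : ‖x‖ ^ 2 ≤ C * ‖x‖ * Real.sqrt S := by
    refine le_trans h1 (le_trans h2 ?_)
    exact mul_le_mul_of_nonneg_right hqn (Real.sqrt_nonneg S)
  have hsq := Real.sq_sqrt hS0
  have hsn := Real.sqrt_nonneg S
  have h6 : ‖x‖ ≤ C * Real.sqrt S := by nlinarith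
  have h7 : ‖x‖ ^ 2 ≤ C ^ 2 * S := by nlinarith
  rw [div_mul_eq_mul_div, div_le_iff₀ (by positivity : (0:ℝ) < C ^ 2)]
  nlinarith
end
end
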